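/- For every n ≥ 1 and every 0 ≤ k ≤ n, the Lie algebra g₍₃ₙ₊₂,ₖ₎ is solvable, and its derived subalgebra [g₍₃ₙ₊₂,ₖ₎, g₍₃ₙ₊₂,ₖ₎] equals the span of X₁, …, X₂ₙ₊₁ and is isomorphic as a Lie algebra to the Heisenberg Lie algebra h_n; in particular this derived subalgebra is nilpotent. -/

import Mathlib

open Module

/-- The bracket relations of the real Lie algebra `g₍₃ₙ₊₂,ₖ₎` with respect to a basis indexed by
`(Fin n × Bool) ⊕ Option (Fin (n+1))`: `Sum.inl (i, false)` is `X₂ᵢ₋₁`, `Sum.inl (i, true)` is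
`X₂ᵢ`, `Sum.inr none` is the central element `X₂ₙ₊₁` of the nilradical and `Sum.inr (some j)`
is `Yⱼ₊₁`. -/
def IsG3n2k (n k : ℕ) {g : Type*} [LieRing g] [LieAlgebra ℝ g]
    (b : Basis ((Fin n × Bool) ⊕ Option (Fin (n + 1))) ℝ g) : Prop :=
  (∀ i : Fin n,
    ⁅b (Sum.inl (i, false)), b (Sum.inl (i, true))⁆ = b (Sum.inr none)) ∧
  (∀ (i j : Fin n) (x y : Bool), i ≠ j →
    ⁅b (Sum.inl (i, x)), b (Sum.inl (j, y))⁆ = 0) ∧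
  (∀ (i : Fin n) (x : Bool), ⁅b (Sum.inl (i, x)), b (Sum.inr none)⁆ = 0) ∧
  (∀ j j' : Fin (n + 1), ⁅b (Sum.inr (some j)), b (Sum.inr (some j'))⁆ = 0) ∧
  (∀ j : Fin (n + 1), ⁅b (Sum.inr (some j)), b (Sum.inr none)⁆ =
    if j.val = n then (2 : ℝ) • b (Sum.inr none) else 0) ∧
  (∀ (j : Fin (n + 1)) (i : Fin n) (x : Bool),
    ⁅b (Sum.inr (some j)), b (Sum.inl (i, x))⁆ =
      if j.val = n then b (Sum.inl (i, x))
      else if j.val = i.val then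
        (if j.val < k then
          cond x (-b (Sum.inl (i, false))) (b (Sum.inl (i, true)))
        else
          cond x (-b (Sum.inl (i, true))) (b (Sum.inl (i, false))))
      else 0)

private lemma lieHom_of_basis' {L M : Type*} [LieRing L] [LieAlgebra ℝ L] [LieRing M]
    [LieAlgebra ℝ M] {ι : Type*} (bL : Basis ι ℝ L) (f : L →ₗ[ℝ] M)
    (hf : ∀ i j, f ⁅bL i, bL j⁆ = ⁅f (bL i), f (bL j)⁆) (x y : L) :
    f ⁅x, y⁆ = ⁅f x, f y⁆ := by
  have hx : x ∈ Submodule.span ℝ (Set.range bL) := by rw [bL.span_eq]; trivial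
  have hy : y ∈ Submodule.span ℝ (Set.range bL) := by rw [bL.span_eq]; trivial
  refine Submodule.span_induction
    (p := fun x _ => ∀ y ∈ Submodule.span ℝ (Set.range bL), f ⁅x, y⁆ = ⁅f x, f y⁆)
    ?_ ?_ ?_ ?_ hx y hy
  · rintro _ ⟨i, rfl⟩ y hy
    refine Submodule.span_induction
      (p := fun y _ => f ⁅bL i, y⁆ = ⁅f (bL i), f y⁆) ?_ ?_ ?_ ?_ hy
    · rintro _ ⟨j, rfl⟩; exact hf i j
    · simp
    · intro a c _ _ ha hc; simp only [lie_add, map_add, ha, hc]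
    · intro t a _ ha; simp only [lie_smul, map_smul, ha]
  · intro y hy; simp
  · intro a c _ _ ha hc y hy; simp only [add_lie, map_add, ha y hy, hc y hy]
  · intro t a _ ha y hy; simp only [smul_lie, map_smul, ha y hy]

theorem g3n2k_solvable_derived_heisenberg (n : ℕ) (hn : 1 ≤ n) (k : ℕ) (hk : k ≤ n)
    {g : Type} [LieRing g] [LieAlgebra ℝ g]
    (b : Basis ((Fin n × Bool) ⊕ Option (Fin (n + 1))) ℝ g) (hg : IsG3n2k n k b) :
    LieAlgebra.IsSolvable g ∧
    (LieSubmodule.toSubmodule ⁅(⊤ : LieIdeal ℝ g), (⊤ : LieIdeal ℝ g)⁆ =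
      Submodule.span ℝ
        (Set.range (fun p : Fin n × Bool => b (Sum.inl p)) ∪ {b (Sum.inr none)})) ∧
    (∀ (h : Type) (_ : LieRing h) (_ : LieAlgebra ℝ h)
        (bh : Basis ((Fin n × Bool) ⊕ Unit) ℝ h),
      (∀ i : Fin n,
        ⁅bh (Sum.inl (i, false)), bh (Sum.inl (i, true))⁆ = bh (Sum.inr ())) →
      (∀ (i j : Fin n) (x y : Bool), i ≠ j →
        ⁅bh (Sum.inl (i, x)), bh (Sum.inl (j, y))⁆ = 0) →
      (∀ p : (Fin n × Bool) ⊕ Unit, ⁅bh p, bh (Sum.inr ())⁆ = 0) →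
      Nonempty ((⁅(⊤ : LieIdeal ℝ g), (⊤ : LieIdeal ℝ g)⁆ : LieIdeal ℝ g) ≃ₗ⁅ℝ⁆ h)) ∧
    LieRing.IsNilpotent (⁅(⊤ : LieIdeal ℝ g), (⊤ : LieIdeal ℝ g)⁆ : LieIdeal ℝ g) := by
  obtain ⟨h1, h2, h3, h4, h5, h6⟩ := hg
  set SSet : Set g :=
    Set.range (fun p : Fin n × Bool => b (Sum.inl p)) ∪ {b (Sum.inr none)} with hSSet
  set SS : Submodule ℝ g := Submodule.span ℝ SSet with hSS
  have memX : ∀ p : Fin n × Bool, b (Sum.inl p) ∈ SS :=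
    fun p => Submodule.subset_span (Or.inl ⟨p, rfl⟩)
  have memZ : b (Sum.inr none) ∈ SS := Submodule.subset_span (Or.inr rfl)
  set Z₀ : Submodule ℝ g := Submodule.span ℝ {b (Sum.inr none)} with hZ₀
  have memZ₀ : b (Sum.inr none) ∈ Z₀ := Submodule.mem_span_singleton_self _
  have Z₀le : ∀ z ∈ Z₀, z ∈ SS := by
    intro z hz
    obtain ⟨c, rfl⟩ := Submodule.mem_span_singleton.1 hz
    exact SS.smul_mem c memZ
  -- brackets of basis vectors lie in SS
  have hbb : ∀ p q, ⁅b p, b q⁆ ∈ SS := by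
    rintro (⟨i, x⟩ | _ | j) (⟨i', y⟩ | _ | j')
    · by_cases hij : i = i'
      · subst hij
        cases x <;> cases y
        · rw [lie_self]; exact SS.zero_mem
        · rw [h1 i]; exact memZ
        · rw [← lie_skew, h1 i]; exact SS.neg_mem memZ
        · rw [lie_self]; exact SS.zero_mem
      · rw [h2 i i' x y hij]; exact SS.zero_mem
    · rw [h3 i x]; exact SS.zero_mem
    · rw [← lie_skew, h6 j' i x]
      refine SS.neg_mem ?_
      split_ifs <;> cases x <;>
        (try simp only [Bool.cond_false, Bool.cond_true]) <;>
        first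
          | exact memX _
          | exact SS.neg_mem (memX _)
          | exact SS.zero_mem
    · rw [← lie_skew, h3 i' y, neg_zero]; exact SS.zero_mem
    · rw [lie_self]; exact SS.zero_mem
    · rw [← lie_skew, h5 j']
      refine SS.neg_mem ?_
      split_ifs
      · exact SS.smul_mem _ memZ
      · exact SS.zero_mem
    · rw [h6 j i' y]
      split_ifs <;> cases y <;>
        (try simp only [Bool.cond_false, Bool.cond_true]) <;>
        first
          | exact memX _
          | exact SS.neg_mem (memX _)
          | exact SS.zero_mem
    · rw [h5 j]
      split_ifs
      · exact SS.smul_mem _ memZ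
      · exact SS.zero_mem
    · rw [h4 j j']; exact SS.zero_mem
  -- every bracket lies in SS
  have hbrSS : ∀ x y : g, ⁅x, y⁆ ∈ SS := by
    have hmem : ∀ z : g, z ∈ Submodule.span ℝ (Set.range b) := fun z => by
      rw [b.span_eq]; trivial
    intro x y
    refine Submodule.span_induction (p := fun x _ => ∀ y, ⁅x, y⁆ ∈ SS)
      ?_ ?_ ?_ ?_ (hmem x) y
    · rintro _ ⟨p, rfl⟩ y
      refine Submodule.span_induction (p := fun y _ => ⁅b p, y⁆ ∈ SS) ?_ ?_ ?_ ?_ (hmem y)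
      · rintro _ ⟨q, rfl⟩; beta_reduce; exact hbb p q
      · beta_reduce; rw [lie_zero]; exact SS.zero_mem
      · intro a c _ _ ha hc; beta_reduce; rw [lie_add]; exact SS.add_mem ha hc
      · intro t a _ ha; beta_reduce; rw [lie_smul]; exact SS.smul_mem t ha
    · intro y; beta_reduce; rw [zero_lie]; exact SS.zero_mem
    · intro a c _ _ ha hc y; beta_reduce; rw [add_lie]; exact SS.add_mem (ha y) (hc y)
    · intro t a _ ha y; beta_reduce; rw [smul_lie]; exact SS.smul_mem t (ha y)
  -- the derived ideal equals SS
  have hD1 : LieSubmodule.toSubmodule ⁅(⊤ : LieIdeal ℝ g), (⊤ : LieIdeal ℝ g)⁆ = SS := by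
    apply le_antisymm
    · rw [LieSubmodule.lieIdeal_oper_eq_linear_span']
      refine Submodule.span_le.2 ?_
      rintro _ ⟨x, -, y, -, rfl⟩
      exact hbrSS x y
    · rw [hSS, Submodule.span_le]
      rintro z (⟨⟨i, x⟩, rfl⟩ | rfl) <;> beta_reduce
      · have h6' := h6 (Fin.last n) i x
        rw [if_pos (Fin.val_last n)] at h6'
        rw [← h6']
        exact (LieSubmodule.mem_toSubmodule _).2
          (LieSubmodule.lie_mem_lie (LieSubmodule.mem_top _) (LieSubmodule.mem_top _))
      · rw [← h1 ⟨0, hn⟩]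
        exact (LieSubmodule.mem_toSubmodule _).2
          (LieSubmodule.lie_mem_lie (LieSubmodule.mem_top _) (LieSubmodule.mem_top _))
  -- brackets of SS elements lie in Z₀
  have hCgen : ∀ z ∈ SSet, ∀ w ∈ SSet, ⁅z, w⁆ ∈ Z₀ := by
    rintro _ (⟨⟨i, x⟩, rfl⟩ | rfl) _ (⟨⟨i', y⟩, rfl⟩ | rfl)
    · by_cases hij : i = i'
      · subst hij
        cases x <;> cases y
        · rw [lie_self]; exact Z₀.zero_mem
        · rw [h1 i]; exact memZ₀
        · rw [← lie_skew, h1 i]; exact Z₀.neg_mem memZ₀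
        · rw [lie_self]; exact Z₀.zero_mem
      · rw [h2 i i' x y hij]; exact Z₀.zero_mem
    · rw [h3 i x]; exact Z₀.zero_mem
    · rw [← lie_skew, h3 i' y, neg_zero]; exact Z₀.zero_mem
    · rw [lie_self]; exact Z₀.zero_mem
  have hC : ∀ z ∈ SS, ∀ w ∈ SS, ⁅z, w⁆ ∈ Z₀ := by
    intro z hz
    refine Submodule.span_induction (p := fun z _ => ∀ w ∈ SS, ⁅z, w⁆ ∈ Z₀) ?_ ?_ ?_ ?_ hz
    · intro z' hz' w hw
      beta_reduce
      refine Submodule.span_induction (p := fun w _ => ⁅z', w⁆ ∈ Z₀) ?_ ?_ ?_ ?_ hw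
      · intro w' hw'; beta_reduce; exact hCgen z' hz' w' hw'
      · beta_reduce; rw [lie_zero]; exact Z₀.zero_mem
      · intro a c _ _ ha hc; beta_reduce; rw [lie_add]; exact Z₀.add_mem ha hc
      · intro t a _ ha; beta_reduce; rw [lie_smul]; exact Z₀.smul_mem t ha
    · intro w _; beta_reduce; rw [zero_lie]; exact Z₀.zero_mem
    · intro a c _ _ ha hc w hw; beta_reduce; rw [add_lie]; exact Z₀.add_mem (ha w hw) (hc w hw)
    · intro t a _ ha w hw; beta_reduce; rw [smul_lie]; exact Z₀.smul_mem t (ha w hw)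
  -- SS brackets with Z₀ vanish
  have hC0 : ∀ z ∈ SS, ⁅z, b (Sum.inr none)⁆ = 0 := by
    intro z hz
    refine Submodule.span_induction (p := fun z _ => ⁅z, b (Sum.inr none)⁆ = 0) ?_ ?_ ?_ ?_ hz
    · rintro _ (⟨⟨i, x⟩, rfl⟩ | rfl) <;> beta_reduce
      · exact h3 i x
      · exact lie_self _
    · beta_reduce; rw [zero_lie]
    · intro a c _ _ ha hc; beta_reduce; rw [add_lie, ha, hc, add_zero]
    · intro t a _ ha; beta_reduce; rw [smul_lie, ha, smul_zero]
  have hC' : ∀ z ∈ SS, ∀ w ∈ Z₀, ⁅z, w⁆ = 0 := by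
    intro z hz w hw
    obtain ⟨c, rfl⟩ := Submodule.mem_span_singleton.1 hw
    rw [lie_smul, hC0 z hz, smul_zero]
  -- solvability
  have hds1 : LieAlgebra.derivedSeries ℝ g 1 = ⁅(⊤ : LieIdeal ℝ g), (⊤ : LieIdeal ℝ g)⁆ := by
    rw [LieAlgebra.derivedSeries_def, LieAlgebra.derivedSeriesOfIdeal_succ,
      LieAlgebra.derivedSeriesOfIdeal_zero]
  have hds1mem : ∀ z ∈ LieAlgebra.derivedSeries ℝ g 1, z ∈ SS := by
    intro z hz
    rw [hds1] at hz
    exact hD1 ▸ (LieSubmodule.mem_toSubmodule _).2 hz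
  have hds2 : LieAlgebra.derivedSeries ℝ g 2 =
      ⁅LieAlgebra.derivedSeries ℝ g 1, LieAlgebra.derivedSeries ℝ g 1⁆ := by
    rw [LieAlgebra.derivedSeries_def, LieAlgebra.derivedSeriesOfIdeal_succ,
      LieAlgebra.derivedSeries_def]
  have hds2mem : ∀ z ∈ LieAlgebra.derivedSeries ℝ g 2, z ∈ Z₀ := by
    intro z hz
    have hz' : z ∈ LieSubmodule.toSubmodule (LieAlgebra.derivedSeries ℝ g 2) :=
      (LieSubmodule.mem_toSubmodule _).2 hz
    rw [hds2, LieSubmodule.lieIdeal_oper_eq_linear_span'] at hz'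
    refine Submodule.span_induction (p := fun z _ => z ∈ Z₀) ?_ ?_ ?_ ?_ hz'
    · rintro _ ⟨x, hx, y, hy, rfl⟩
      beta_reduce
      exact hC x (hds1mem x hx) y (hds1mem y hy)
    · beta_reduce; exact Z₀.zero_mem
    · intro a c _ _ ha hc; beta_reduce; exact Z₀.add_mem ha hc
    · intro t a _ ha; beta_reduce; exact Z₀.smul_mem t ha
  have hds3 : LieAlgebra.derivedSeries ℝ g 3 = ⊥ := by
    have hds3e : LieAlgebra.derivedSeries ℝ g 3 =
        ⁅LieAlgebra.derivedSeries ℝ g 2, LieAlgebra.derivedSeries ℝ g 2⁆ := by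
      rw [LieAlgebra.derivedSeries_def, LieAlgebra.derivedSeriesOfIdeal_succ,
        LieAlgebra.derivedSeries_def]
    rw [← LieSubmodule.toSubmodule_inj, LieSubmodule.bot_toSubmodule, hds3e,
      LieSubmodule.lieIdeal_oper_eq_linear_span']
    refine le_antisymm (Submodule.span_le.2 ?_) bot_le
    rintro _ ⟨x, hx, y, hy, rfl⟩
    rw [SetLike.mem_coe, Submodule.mem_bot]
    exact hC' x (Z₀le x (hds2mem x hx)) y (hds2mem y hy)
  refine ⟨(LieAlgebra.isSolvable_iff ℝ g).2 ⟨3, hds3⟩, hD1, ?_, ?_⟩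
  · -- isomorphism with any Heisenberg model
    intro h _ _ bh hb1 hb2 hb3
    set v : ((Fin n × Bool) ⊕ Unit) → g :=
      Sum.elim (fun p => b (Sum.inl p)) (fun _ => b (Sum.inr none)) with hv
    have hvcomp : v = b ∘ (Sum.map id fun _ : Unit => (none : Option (Fin (n + 1)))) := by
      funext p; rcases p with p | ⟨⟩ <;> rfl
    have hinj : Function.Injective (Sum.map (id : Fin n × Bool → Fin n × Bool)
        fun _ : Unit => (none : Option (Fin (n + 1)))) := by
      rintro (p | ⟨⟩) (q | ⟨⟩) hpq
      · exact congrArg Sum.inl (Sum.inl_injective hpq)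
      · exact absurd hpq (Sum.inl_ne_inr)
      · exact absurd hpq (Sum.inr_ne_inl)
      · rfl
    have hvli : LinearIndependent ℝ v := by
      rw [hvcomp]; exact b.linearIndependent.comp _ hinj
    have hrange : Set.range v = SSet := by
      rw [hSSet]
      ext z
      constructor
      · rintro ⟨p | ⟨⟩, rfl⟩
        · exact Or.inl ⟨p, rfl⟩
        · exact Or.inr rfl
      · rintro (⟨p, rfl⟩ | rfl)
        · exact ⟨Sum.inl p, rfl⟩
        · exact ⟨Sum.inr (), rfl⟩
    have hspan : Submodule.span ℝ (Set.range v) =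
        LieSubmodule.toSubmodule ⁅(⊤ : LieIdeal ℝ g), (⊤ : LieIdeal ℝ g)⁆ := by
      rw [hrange]; exact hD1.symm
    let bI : Basis ((Fin n × Bool) ⊕ Unit) ℝ
        (↥(⁅(⊤ : LieIdeal ℝ g), (⊤ : LieIdeal ℝ g)⁆ : LieIdeal ℝ g)) :=
      (Basis.span hvli).map (LinearEquiv.ofEq _ _ hspan)
    have bIcoe : ∀ i, (bI i : g) = v i := by
      intro i
      exact congrArg Subtype.val (Basis.span_apply hvli i)
    let f := bI.equiv bh (Equiv.refl _)
    have hfb : ∀ i, f.toLinearMap (bI i) = bh i := fun i => by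
      simp [f, Basis.equiv_apply]
    have coe0 : ∀ (x y : (⁅(⊤ : LieIdeal ℝ g), (⊤ : LieIdeal ℝ g)⁆ : LieIdeal ℝ g)),
        (↑⁅x, y⁆ : g) = ⁅(x : g), (y : g)⁆ := fun _ _ => rfl
    have key : ∀ i j, f.toLinearMap ⁅bI i, bI j⁆ =
        ⁅f.toLinearMap (bI i), f.toLinearMap (bI j)⁆ := by
      intro i j
      rcases i with ⟨a, x⟩ | ⟨⟩ <;> rcases j with ⟨c, y⟩ | ⟨⟩
      · by_cases hac : a = c
        · subst hac
          cases x <;> cases y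
          · rw [lie_self, lie_self, map_zero]
          · have hb : ⁅bI (Sum.inl (a, false)), bI (Sum.inl (a, true))⁆ = bI (Sum.inr ()) := by
              apply Subtype.ext
              rw [coe0, bIcoe, bIcoe, bIcoe]
              exact h1 a
            rw [hb, hfb, hfb, hfb, hb1 a]
          · have hb : ⁅bI (Sum.inl (a, true)), bI (Sum.inl (a, false))⁆ = -bI (Sum.inr ()) := by
              apply Subtype.ext
              rw [coe0, bIcoe, bIcoe, NegMemClass.coe_neg, bIcoe, ← lie_skew]
              show -⁅b (Sum.inl (a, false)), b (Sum.inl (a, true))⁆ = _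
              rw [h1 a]; rfl
            rw [hb, map_neg, hfb, hfb, hfb, ← lie_skew, hb1 a]
          · rw [lie_self, lie_self, map_zero]
        · have hb : ⁅bI (Sum.inl (a, x)), bI (Sum.inl (c, y))⁆ = 0 := by
            apply Subtype.ext
            rw [coe0, bIcoe, bIcoe, ZeroMemClass.coe_zero]
            exact h2 a c x y hac
          rw [hb, map_zero, hfb, hfb, hb2 a c x y hac]
      · have hb : ⁅bI (Sum.inl (a, x)), bI (Sum.inr ())⁆ = 0 := by
          apply Subtype.ext
          rw [coe0, bIcoe, bIcoe, ZeroMemClass.coe_zero]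
          exact h3 a x
        rw [hb, map_zero, hfb, hfb, hb3 (Sum.inl (a, x))]
      · have hb : ⁅bI (Sum.inr ()), bI (Sum.inl (c, y))⁆ = 0 := by
          apply Subtype.ext
          rw [coe0, bIcoe, bIcoe, ZeroMemClass.coe_zero, ← lie_skew]
          show -⁅b (Sum.inl (c, y)), b (Sum.inr none)⁆ = 0
          rw [h3 c y, neg_zero]
        rw [hb, map_zero, hfb, hfb, ← lie_skew, hb3 (Sum.inl (c, y)), neg_zero]
      · rw [lie_self, lie_self, map_zero]
    have hml : ∀ x y, f.toLinearMap ⁅x, y⁆ = ⁅f.toLinearMap x, f.toLinearMap y⁆ :=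
      lieHom_of_basis' bI f.toLinearMap key
    exact ⟨⟨⟨f.toLinearMap, fun {x y} => hml x y⟩, f.invFun, f.left_inv, f.right_inv⟩⟩
  · -- nilpotency of the derived ideal
    set I : LieIdeal ℝ g := ⁅(⊤ : LieIdeal ℝ g), (⊤ : LieIdeal ℝ g)⁆ with hI
    have hcoeS : ∀ x : I, (x : g) ∈ SS := fun x =>
      hD1 ▸ (LieSubmodule.mem_toSubmodule _).2 x.2
    have hlcs1 : ∀ y : I, y ∈ LieModule.lowerCentralSeries ℝ (↥I) (↥I) 1 → (y : g) ∈ Z₀ := by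
      intro y hy
      rw [LieModule.lowerCentralSeries_succ, LieModule.lowerCentralSeries_zero] at hy
      have hy' : y ∈ LieSubmodule.toSubmodule
          (⁅(⊤ : LieIdeal ℝ I), (⊤ : LieSubmodule ℝ I I)⁆) :=
        (LieSubmodule.mem_toSubmodule _).2 hy
      rw [LieSubmodule.lieIdeal_oper_eq_linear_span'] at hy'
      refine Submodule.span_induction (p := fun (y : ↥I) _ => y.val ∈ Z₀) ?_ ?_ ?_ ?_ hy'
      · rintro _ ⟨z, -, w, -, rfl⟩
        beta_reduce
        exact hC _ (hcoeS z) _ (hcoeS w)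
      · beta_reduce; exact Z₀.zero_mem
      · intro a c _ _ ha hc
        beta_reduce
        rw [AddSubmonoid.coe_add]
        exact Z₀.add_mem ha hc
      · intro t a _ ha
        beta_reduce
        rw [SetLike.val_smul]
        exact Z₀.smul_mem t ha
    have hlcs2 : LieModule.lowerCentralSeries ℝ (↥I) (↥I) 2 = ⊥ := by
      rw [show (2 : ℕ) = 1 + 1 from rfl, LieModule.lowerCentralSeries_succ,
        ← LieSubmodule.toSubmodule_inj, LieSubmodule.bot_toSubmodule,
        LieSubmodule.lieIdeal_oper_eq_linear_span']
      refine le_antisymm (Submodule.span_le.2 ?_) bot_le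
      rintro _ ⟨z, -, w, hw, rfl⟩
      rw [SetLike.mem_coe, Submodule.mem_bot]
      exact Subtype.ext (hC' _ (hcoeS z) _ (hlcs1 w hw))
    exact (LieModule.isNilpotent_iff ℝ (↥I) (↥I)).2 ⟨2, hlcs2⟩
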